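/- Let S and S' be finite nonempty sets with S' ⊆ S, let ν be the uniform probability measure on S and ν' the uniform probability measure on S'. Then for any finite measurable partition 𝒫 of the ambient space, H_ν(𝒫) ≥ (|S'|/|S|) H_{ν'}(𝒫) + (|S'|/|S|) log(|S'|/|S|) − C for the constant C = 1/e + log 2. -/
import Mathlib

lemma negMulLog_le_inv_exp' {x : ℝ} (hx : 0 ≤ x) : Real.negMulLog x ≤ 1 / Real.exp 1 := by
  rcases eq_or_lt_of_le hx with h | h
  · simp [← h]
    positivity
  · have he : (0:ℝ) < Real.exp 1 := Real.exp_pos 1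
    have h2 : -(Real.log x) ≤ (x * Real.exp 1)⁻¹ := by
      have h3 := Real.log_le_sub_one_of_pos (show (0:ℝ) < 1 / (x * Real.exp 1) by positivity)
      rw [one_div, Real.log_inv, Real.log_mul (ne_of_gt h) (ne_of_gt he), Real.log_exp] at h3
      linarith
    have hxe : x * (x * Real.exp 1)⁻¹ = 1 / Real.exp 1 := by
      field_simp
    have : Real.negMulLog x = x * (-(Real.log x)) := by
      rw [Real.negMulLog]; ring
    rw [this, ← hxe]
    exact mul_le_mul_of_nonneg_left h2 hx

lemma negMulLog_mono_bound {a b : ℝ} (ha : 0 ≤ a) (hab : a ≤ b) (hb : b ≤ 1) :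
    Real.negMulLog a ≤ Real.negMulLog b + b / Real.exp 1 := by
  have hb0 : 0 ≤ b := le_trans ha hab
  rcases eq_or_lt_of_le ha with h | h
  · rw [← h, Real.negMulLog_zero]
    have h1 := Real.negMulLog_nonneg hb0 hb
    have h2 : 0 ≤ b / Real.exp 1 := by positivity
    linarith
  · have hbpos : 0 < b := lt_of_lt_of_le h hab
    have key : Real.negMulLog a = -a * Real.log b + b * Real.negMulLog (a / b) := by
      rw [Real.negMulLog, Real.negMulLog, Real.log_div (ne_of_gt h) (ne_of_gt hbpos)]
      field_simp
      ring
    rw [key]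
    have h1 : b * Real.negMulLog (a / b) ≤ b * (1 / Real.exp 1) :=
      mul_le_mul_of_nonneg_left (negMulLog_le_inv_exp' (by positivity)) hb0
    have h2 : -a * Real.log b ≤ -b * Real.log b := by
      have hlb : Real.log b ≤ 0 := Real.log_nonpos hb0 hb
      nlinarith
    have h3 : Real.negMulLog b = -b * Real.log b := rfl
    have h4 : b * (1 / Real.exp 1) = b / Real.exp 1 := by ring
    rw [h3]
    linarith [h4 ▸ h1]

open Classical in
/-- Entropy inequality for the uniform measures on `S' ⊆ S` with respect to a
finite partition `𝒫` of the ambient space. `H_ν(𝒫) = ∑_P negMulLog(|S ∩ P|/|S|)`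
is the Shannon entropy of `𝒫` for the uniform probability measure on `S`. -/
theorem stmt_4 {Y : Type*} (S S' : Finset Y) (hSS : S' ⊆ S)
    (hS : S.Nonempty) (hS' : S'.Nonempty)
    {ι : Type*} (I : Finset ι) (P : ι → Set Y)
    (hdisj : ∀ i ∈ I, ∀ j ∈ I, i ≠ j → Disjoint (P i) (P j))
    (hcover : ∀ y : Y, ∃ i ∈ I, y ∈ P i) :
    (∑ i ∈ I, Real.negMulLog (((S.filter (fun y => y ∈ P i)).card : ℝ) / S.card))
      ≥ ((S'.card : ℝ) / S.card) *
          (∑ i ∈ I, Real.negMulLog (((S'.filter (fun y => y ∈ P i)).card : ℝ) / S'.card))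
        + ((S'.card : ℝ) / S.card) * Real.log ((S'.card : ℝ) / S.card)
        - (1 / Real.exp 1 + Real.log 2) := by
  have hn0 : (0:ℝ) < S.card := by exact_mod_cast Finset.card_pos.mpr hS
  have hm0 : (0:ℝ) < S'.card := by exact_mod_cast Finset.card_pos.mpr hS'
  set n : ℝ := (S.card : ℝ) with hn
  set m : ℝ := (S'.card : ℝ) with hm
  set t : ℝ := m / n with ht
  have ht0 : 0 < t := div_pos hm0 hn0
  have ht1 : t ≤ 1 := by
    rw [ht, div_le_one hn0, hm, hn]
    exact_mod_cast Finset.card_le_card hSS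
  set A : ι → ℝ := fun i => ((S'.filter (fun y => y ∈ P i)).card : ℝ) with hA
  set B : ι → ℝ := fun i => ((S.filter (fun y => y ∈ P i)).card : ℝ) with hB
  have hAB : ∀ i, A i ≤ B i := fun i => by
    simp only [hA, hB]
    exact_mod_cast Finset.card_le_card (Finset.filter_subset_filter _ hSS)
  have hA0 : ∀ i, 0 ≤ A i := fun i => by simp only [hA]; positivity
  have hB0 : ∀ i, 0 ≤ B i := fun i => by simp only [hB]; positivity
  have hBn : ∀ i, B i ≤ n := fun i => by
    simp only [hB, hn]
    exact_mod_cast Finset.card_le_card (Finset.filter_subset _ _)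
  have hfdisj : ∀ T : Finset Y, ∀ i ∈ I, ∀ j ∈ I, i ≠ j →
      Disjoint (T.filter (fun y => y ∈ P i)) (T.filter (fun y => y ∈ P j)) := by
    intro T i hi j hj hij
    refine Finset.disjoint_left.mpr fun y hyi hyj => ?_
    have h1 := (Finset.mem_filter.mp hyi).2
    have h2 := (Finset.mem_filter.mp hyj).2
    exact Set.disjoint_left.mp (hdisj i hi j hj hij) h1 h2
  have hsumA : ∑ i ∈ I, A i = m := by
    have h1 : ∑ i ∈ I, A i
        = ((I.biUnion (fun i => S'.filter (fun y => y ∈ P i))).card : ℝ) := by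
      rw [Finset.card_biUnion (hfdisj S')]
      push_cast
      rfl
    rw [h1, hm]
    congr 2
    apply Finset.Subset.antisymm
    · exact Finset.biUnion_subset.mpr fun i _ => Finset.filter_subset _ _
    · intro y hy
      obtain ⟨i, hi, hyi⟩ := hcover y
      exact Finset.mem_biUnion.mpr ⟨i, hi, Finset.mem_filter.mpr ⟨hy, hyi⟩⟩
  have hsumB : ∑ i ∈ I, B i ≤ n := by
    have h1 : ∑ i ∈ I, B i
        = ((I.biUnion (fun i => S.filter (fun y => y ∈ P i))).card : ℝ) := by
      rw [Finset.card_biUnion (hfdisj S)]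
      push_cast
      rfl
    rw [h1, hn]
    exact_mod_cast Finset.card_le_card
      (Finset.biUnion_subset.mpr fun i _ => Finset.filter_subset _ _)
  have hterm : ∀ i, t * Real.negMulLog (A i / m) =
      Real.negMulLog (A i / n) + (A i / n) * Real.log t := by
    intro i
    rcases eq_or_lt_of_le (hA0 i) with h | h
    · simp [← h]
    · have hAm : A i / m = (A i / n) / t := by
        rw [ht]; field_simp
      rw [hAm, Real.negMulLog, Real.negMulLog,
        Real.log_div (by positivity) (ne_of_gt ht0)]
      field_simp
      ring
  have hH' : t * (∑ i ∈ I, Real.negMulLog (A i / m))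
      = (∑ i ∈ I, Real.negMulLog (A i / n)) + t * Real.log t := by
    rw [Finset.mul_sum, Finset.sum_congr rfl (fun i _ => hterm i),
      Finset.sum_add_distrib, ← Finset.sum_mul]
    congr 2
    rw [← Finset.sum_div, hsumA]
  have hmain : ∑ i ∈ I, Real.negMulLog (A i / n)
      ≤ (∑ i ∈ I, Real.negMulLog (B i / n)) + 1 / Real.exp 1 := by
    have step : ∀ i ∈ I, Real.negMulLog (A i / n)
        ≤ Real.negMulLog (B i / n) + (B i / n) / Real.exp 1 := by
      intro i _
      refine negMulLog_mono_bound (div_nonneg (hA0 i) hn0.le) ?_ ?_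
      · exact (div_le_div_iff_of_pos_right hn0).mpr (hAB i)
      · rw [div_le_one hn0]; exact hBn i
    calc ∑ i ∈ I, Real.negMulLog (A i / n)
        ≤ ∑ i ∈ I, (Real.negMulLog (B i / n) + (B i / n) / Real.exp 1) :=
          Finset.sum_le_sum step
      _ = (∑ i ∈ I, Real.negMulLog (B i / n)) + (∑ i ∈ I, B i) / n / Real.exp 1 := by
          rw [Finset.sum_add_distrib]
          congr 1
          rw [← Finset.sum_div, ← Finset.sum_div]
      _ ≤ (∑ i ∈ I, Real.negMulLog (B i / n)) + 1 / Real.exp 1 := by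
          gcongr
          rw [div_le_one hn0]
          exact hsumB
  have hlogt : t * Real.log t ≤ 0 :=
    mul_nonpos_of_nonneg_of_nonpos ht0.le (Real.log_nonpos ht0.le ht1)
  have hlog2 : (0:ℝ) ≤ Real.log 2 := Real.log_nonneg (by norm_num)
  rw [ge_iff_le, hH']
  linarith [hmain]
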